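/- Let G be an inverse semigroup, H' ⊆ G a finite sub-inverse semigroup, and A a G-algebra. For all a, b, c ∈ A, all r, g, h ∈ G_H and all s ∈ G, the following identity holds in 𝔽(G,A): [s g ∈ G_H]·[r ≡ s g]·[g* s* h ∈ H] · α_{g*}(α_{s*}(α_s(b*)·a*·c)) · (g* s* h) = [g* s* h ∈ H]·[s*·r ∈ G_H]·[s*·h ∈ G_H]·[s*·r ≡ s*·h] · α_{g*}(b*·α_{s*}(a*)·α_{s*}(c)) · (g* s* h), where each bracket [P] is the scalar 1 if the assertion P holds and 0 otherwise. (This is the identity of the two expressions (x4) and (x5) proving ⟨f x, y⟩_{B₀} = ⟨x, f* y⟩_{B₀} on standard elements.) -/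

import Mathlib

/-! Common setup: inverse semigroups, G-algebras, and the universal *-algebra 𝔽(G,A). -/

noncomputable section

/-- An inverse semigroup: a semigroup in which every element `g` has a unique
generalized inverse, denoted `star g`. -/
class InverseSemigroup (G : Type*) extends Semigroup G, Star G where
  mul_star_mul_self : ∀ g : G, g * star g * g = g
  star_mul_self_mul_star : ∀ g : G, star g * g * star g = star g
  star_unique : ∀ g h : G, g * h * g = g → h * g * h = h → h = star g

namespace Green

/-! ### The free complex *-algebra on a set of generators

The free complex *-algebra on a set `Y` is realized as the monoid algebra of the free
monoid on the letters `Y × Bool` (a generator together with a formal star flag); its star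
operation conjugates coefficients, reverses words and flips the star flags. -/

/-- The free complex *-algebra on the set `Y`. -/
abbrev FreeStar (Y : Type*) := MonoidAlgebra ℂ (FreeMonoid (Y × Bool))

namespace FreeStar

variable {Y : Type*}

/-- Star of a word: reverse it and flip all star flags. -/
def wordStar (w : FreeMonoid (Y × Bool)) : FreeMonoid (Y × Bool) :=
  FreeMonoid.ofList (((FreeMonoid.toList w).map fun x => (x.1, !x.2)).reverse)

lemma wordStar_mul (v w : FreeMonoid (Y × Bool)) :
    wordStar (v * w) = wordStar w * wordStar v := by
  simp [wordStar, FreeMonoid.toList_mul]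

lemma wordStar_wordStar (w : FreeMonoid (Y × Bool)) : wordStar (wordStar w) = w := by
  simp [wordStar, List.map_reverse, List.map_map, Function.comp_def]

/-- The star operation on the free complex *-algebra, as an additive map. -/
def starAux : FreeStar Y →+ FreeStar Y :=
  (MonoidAlgebra.coeffAddEquiv.symm.toAddMonoidHom.comp
    ((Finsupp.mapDomain.addMonoidHom wordStar).comp
      (Finsupp.mapRange.addMonoidHom (starRingEnd ℂ).toAddMonoidHom))).comp
    MonoidAlgebra.coeffAddEquiv.toAddMonoidHom

lemma starAux_apply (f : FreeStar Y) :
    starAux f = MonoidAlgebra.ofCoeff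
      (Finsupp.mapDomain wordStar (Finsupp.mapRange (starRingEnd ℂ) (map_zero _) f.coeff)) :=
  rfl

lemma starAux_single (w : FreeMonoid (Y × Bool)) (c : ℂ) :
    starAux (MonoidAlgebra.single w c) = MonoidAlgebra.single (wordStar w) (starRingEnd ℂ c) := by
  rw [starAux_apply]
  simp [← MonoidAlgebra.ofCoeff_single, Finsupp.mapRange_single, Finsupp.mapDomain_single]

instance instStarRing : StarRing (FreeStar Y) where
  star := starAux
  star_involutive := by
    intro f
    induction f using MonoidAlgebra.induction_linear with
    | zero => simp
    | add f g hf hg => simp_all [map_add]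
    | single w c => simp [starAux_single, wordStar_wordStar, starRingEnd_self_apply]
  star_mul := by
    intro f g
    show starAux (f * g) = starAux g * starAux f
    induction f using MonoidAlgebra.induction_linear with
    | zero => simp
    | add f f' hf hf' => simp [mul_add, add_mul, map_add, hf, hf']
    | single w c =>
      induction g using MonoidAlgebra.induction_linear with
      | zero => simp
      | add g g' hg hg' => simp [mul_add, add_mul, map_add, hg, hg']
      | single v d =>
        simp only [MonoidAlgebra.single_mul_single, starAux_single, wordStar_mul, map_mul]
        rw [mul_comm]
  star_add := map_add _

end FreeStar

section GAlgebra

variable {G : Type*} [InverseSemigroup G]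
variable {A : Type*} [NonUnitalNormedRing A] [StarRing A] [CStarRing A] [NormedSpace ℂ A]
  [IsScalarTower ℂ A A] [SMulCommClass ℂ A A] [StarModule ℂ A] [CompleteSpace A]

/-- `α` is an action of the inverse semigroup `G` on the C*-algebra `A` making it a
`G`-algebra: a semigroup homomorphism `G → End(A)` into the *-endomorphisms of `A` such
that `g g*(a)·b = a·g g*(b)` for all `a b : A` and `g : G`. -/
structure IsGAlgebra (α : G → A →⋆ₙₐ[ℂ] A) : Prop where
  map_mul : ∀ g h : G, α (g * h) = (α g).comp (α h)
  central : ∀ (g : G) (a b : A), α (g * star g) a * b = a * α (g * star g) b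

variable (α : G → A →⋆ₙₐ[ℂ] A)

/-- The generator of the free *-algebra corresponding to `a ∈ A`. -/
def genA (a : A) : FreeStar (A ⊕ G) := MonoidAlgebra.single (FreeMonoid.of (Sum.inl a, false)) 1

/-- The generator of the free *-algebra corresponding to `g ∈ G`. -/
def genG (g : G) : FreeStar (A ⊕ G) := MonoidAlgebra.single (FreeMonoid.of (Sum.inr g, false)) 1

/-- The defining relations of `𝔽(G,A)`: the *-algebra relations of `A` are respected, the
multiplication and involution of `G` are respected, and `g(a)·g g* = g·a·g*`,
`[g g*, a] = 0` hold; the relation is moreover closed under `star`, so that the ideal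
generated by it is a two-sided *-ideal. -/
inductive Rel : FreeStar (A ⊕ G) → FreeStar (A ⊕ G) → Prop
  | add_A (a b : A) : Rel (genA (G := G) (a + b)) (genA a + genA b)
  | smul_A (c : ℂ) (a : A) : Rel (genA (G := G) (c • a)) (c • genA a)
  | mul_A (a b : A) : Rel (genA (G := G) (a * b)) (genA a * genA b)
  | star_A (a : A) : Rel (genA (G := G) (star a)) (star (genA a))
  | mul_G (g h : G) : Rel (genG (A := A) (g * h)) (genG g * genG h)
  | star_G (g : G) : Rel (genG (A := A) (star g)) (star (genG g))
  | act (g : G) (a : A) :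
      Rel (genA (α g a) * genG g * genG (star g)) (genG g * genA a * genG (star g))
  | comm (g : G) (a : A) :
      Rel (genG g * genG (star g) * genA a) (genA a * genG g * genG (star g))
  | star_cl {x y} : Rel x y → Rel (star x) (star y)

/-- The universal *-algebra `𝔽(G,A)`: the quotient of the free complex *-algebra on the
set `A ⊔ G` by the two-sided *-ideal generated by the defining relations. -/
abbrev F := RingQuot (Rel α)

instance : StarRing (F α) := RingQuot.starRing _ (fun _ _ h => Rel.star_cl h)

/-- The canonical copy of `a ∈ A` inside `𝔽(G,A)`. -/
def ιA (a : A) : F α := RingQuot.mkAlgHom ℂ (Rel α) (genA a)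

/-- The canonical copy of `g ∈ G` inside `𝔽(G,A)`. -/
def ιG (g : G) : F α := RingQuot.mkAlgHom ℂ (Rel α) (genG g)

/-- The element `e₀(1-e₁)⋯(1-eₙ)` of `𝔽(G,A)` (product expanded multiplicatively),
given `e₀` and the list `[e₁, …, eₙ]`. -/
def elemP (e₀ : G) (l : List G) : F α :=
  l.foldl (fun p e => p - p * ιG α e) (ιG α e₀)

/-- The element `g·e₀(1-e₁)⋯(1-eₙ)` of `𝔽(G,A)`. -/
def elemGE (g e₀ : G) (l : List G) : F α := ιG α g * elemP α e₀ l

/-- The set `E(G)` of projections `e₀(1-e₁)⋯(1-eₙ)` in `𝔽(G,A)`, with `e₀, …, eₙ`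
idempotents of `G`. -/
def EG : Set (F α) :=
  {x | ∃ (e₀ : G) (l : List G), e₀ * e₀ = e₀ ∧ (∀ e ∈ l, e * e = e) ∧ x = elemP α e₀ l}

/-- The inverse semigroup `G_E = {g·p | g ∈ G, p ∈ E(G)}` inside `𝔽(G,A)`. -/
def GE : Set (F α) :=
  {x | ∃ (g e₀ : G) (l : List G),
    e₀ * e₀ = e₀ ∧ (∀ e ∈ l, e * e = e) ∧ x = elemGE α g e₀ l}

/-- The extension of the `G`-action along a list: `(id - α e₁)∘⋯∘(id - α eₙ)`. -/
def actL : List G → A → A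
  | [] => id
  | e :: l => fun a => actL l a - α e (actL l a)

/-- The extension of the `G`-action to `E(G)`:
`α_{e₀(1-e₁)⋯(1-eₙ)} = α_{e₀}∘(id - α_{e₁})∘⋯∘(id - α_{eₙ})`. -/
def actP (e₀ : G) (l : List G) : A → A := fun a => α e₀ (actL α l a)

/-- The extension of the `G`-action to `G_E`: `α_{g·p} = α_g ∘ α_p`. -/
def actGE (g e₀ : G) (l : List G) : A → A := fun a => α g (actP α e₀ l a)

/-- The action of `k* = (g·e₀(1-e₁)⋯(1-eₙ))* = g*·(g e₀ g*)(1 - g e₁ g*)⋯(1 - g eₙ g*)`,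
for `k = g·e₀(1-e₁)⋯(1-eₙ) ∈ G_E`. -/
def actStar (g e₀ : G) (l : List G) : A → A :=
  fun a => α (star g) (actP α (g * e₀ * star g) (l.map fun e => g * e * star g) a)

/-- The subalgebra `A_{k k*} = α_{k k*}(A) = (α_k ∘ α_{k*})(A)`,
for `k = g·e₀(1-e₁)⋯(1-eₙ) ∈ G_E`. -/
def carrier (g e₀ : G) (l : List G) : Set A :=
  Set.range fun a => actGE α g e₀ l (actStar α g e₀ l a)

/-- `S` is a sub-inverse semigroup of `G`: a subset closed under multiplication and
involution. -/
structure IsSubInvSemigroup (S : Set G) : Prop where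
  mul_mem : ∀ {a b : G}, a ∈ S → b ∈ S → a * b ∈ S
  star_mem : ∀ {a : G}, a ∈ S → star a ∈ S

variable (S : Set G)

/-- The set `E(H')` of projections `e₀(1-e₁)⋯(1-eₙ)` with `e₀, …, eₙ` idempotents of
`H' = S`. -/
def EH : Set (F α) :=
  {x | ∃ (e₀ : G) (l : List G), (e₀ ∈ S ∧ e₀ * e₀ = e₀) ∧ (∀ e ∈ l, e ∈ S ∧ e * e = e) ∧
    x = elemP α e₀ l}

/-- `H⁽⁰⁾`: the set of nonzero minimal projections of `E(H')`
(where `q ≤ p` means `q p = q`). -/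
def H0 : Set (F α) :=
  {p | p ∈ EH α S ∧ p ≠ 0 ∧ ∀ q ∈ EH α S, q ≠ 0 → q * p = q → q = p}

/-- The groupoid `H = {t·e | t ∈ H', e ∈ H⁽⁰⁾} \ {0}` associated to `H'`. -/
def Hgpd : Set (F α) :=
  {x | x ≠ 0 ∧ ∃ t ∈ S, ∃ e ∈ H0 α S, x = ιG α t * e}

/-- `G_H = {g·e | g ∈ G, e ∈ H⁽⁰⁾, g* g ≥ e} \ {0}`. -/
def GH : Set (F α) :=
  {x | x ≠ 0 ∧ ∃ (g : G), ∃ e ∈ H0 α S, x = ιG α g * e ∧ e * ιG α (star g * g) = e}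

/-- The relation `≡` on `G_H`: `g ≡ h` iff `g t = h` for some `t ∈ H`. -/
def equivH (x y : F α) : Prop := ∃ t ∈ Hgpd α S, x * t = y

end GAlgebra

/-- For an assertion `P`, the scalar `[P]` which is `1` if `P` is true and `0` if `P`
is false. -/
def ind (P : Prop) : ℂ := @ite _ P (Classical.propDecidable P) 1 0

end Green

/-!
The two elements of `𝔽(G,A)` multiplied by the brackets agree because `α_{g*} ∘ α_{s* s}` and
`α_{g*}` coincide once multiplied on the right by `g* s*`: this is the covariance relation
`g(a)·g = g·a` (from `g(a)·g g* = g·a·g*`) together with `s* s s* = s*`.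

For the scalars, every element of `G_H` or of `H` is a partial isometry of `𝔽(G,A)` whose source
projection `x* x` is a minimal projection of `E(H')`, and `H` is closed under the involution and
under nonzero products. If `T = g* s* h ∈ H`, then `T T* = g* g` and `T* T = h* h`; this forces
`(s g)*(s g) = g* g` and `(s* h)*(s* h) = h* h`, i.e. `s g, s* h ∈ G_H`, and, since the range
projections `x x*` all commute, `g T = s* h`. Then `r t = s g` gives `(s* r)(t T) = s* h`, and
conversely `(s* r) t' = s* h` gives `r (t' T*) = s g`.
-/

namespace InverseSemigroup

variable {G : Type*} [InverseSemigroup G]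

theorem star_involutive : Function.Involutive (star : G → G) := fun g =>
  (star_unique (star g) g (star_mul_self_mul_star g) (mul_star_mul_self g)).symm

instance : InvolutiveStar G where
  star_involutive := star_involutive

theorem star_eq_self_of_isIdempotentElem {e : G} (he : IsIdempotentElem e) : star e = e :=
  (star_unique e e (by rw [he.eq, he.eq]) (by rw [he.eq, he.eq])).symm

theorem isIdempotentElem_mul_star_self (g : G) : IsIdempotentElem (g * star g) := by
  rw [IsIdempotentElem, ← mul_assoc, mul_star_mul_self]

theorem isIdempotentElem_star_mul_self (g : G) : IsIdempotentElem (star g * g) := by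
  rw [IsIdempotentElem, ← mul_assoc, star_mul_self_mul_star]

/-- The inverse `x` of `e f` satisfies `x = f x e`, which forces `x`, hence `e f = star x`,
to be idempotent. -/
theorem isIdempotentElem_mul {e f : G} (he : IsIdempotentElem e) (hf : IsIdempotentElem f) :
    IsIdempotentElem (e * f) := by
  set x := star (e * f)
  have hx₁ : e * f * x * (e * f) = e * f := mul_star_mul_self (e * f)
  have hx₂ : x * (e * f) * x = x := star_mul_self_mul_star (e * f)
  have hx : f * x * e = x := by
    refine star_unique _ _ ?_ ?_
    · simp only [mul_assoc, he.mul_self_mul, hf.mul_self_mul] at hx₁ ⊢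
      exact hx₁
    · calc f * x * e * (e * f) * (f * x * e) = f * (x * (e * f) * x) * e := by
            simp only [mul_assoc, he.mul_self_mul, hf.mul_self_mul]
        _ = f * x * e := by rw [hx₂]
  have hxx : IsIdempotentElem x := by
    calc x * x = f * (x * (e * f) * x) * e := by
          nth_rw 1 [← hx]; nth_rw 2 [← hx]; simp only [mul_assoc]
      _ = x := by rw [hx₂, hx]
  rw [← star_star (e * f), star_eq_self_of_isIdempotentElem hxx]
  exact hxx

theorem commute_of_isIdempotentElem {e f : G} (he : IsIdempotentElem e)
    (hf : IsIdempotentElem f) : Commute e f := by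
  have hef := isIdempotentElem_mul he hf
  have hfe := isIdempotentElem_mul hf he
  have h : f * e = star (e * f) := by
    refine star_unique _ _ ?_ ?_
    · calc e * f * (f * e) * (e * f) = (e * f) * (e * f) := by
            simp only [mul_assoc, he.mul_self_mul, hf.mul_self_mul]
        _ = e * f := hef.eq
    · calc f * e * (e * f) * (f * e) = (f * e) * (f * e) := by
            simp only [mul_assoc, he.mul_self_mul, hf.mul_self_mul]
        _ = f * e := hfe.eq
  exact (h.trans (star_eq_self_of_isIdempotentElem hef)).symm

instance : StarMul G where
  star_mul g h := by
    refine (star_unique _ _ ?_ ?_).symm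
    · calc g * h * (star h * star g) * (g * h) = g * ((h * star h) * (star g * g)) * h := by
            simp only [mul_assoc]
        _ = g * ((star g * g) * (h * star h)) * h := by
            rw [(commute_of_isIdempotentElem (isIdempotentElem_mul_star_self h)
              (isIdempotentElem_star_mul_self g)).eq]
        _ = (g * star g * g) * (h * star h * h) := by simp only [mul_assoc]
        _ = g * h := by rw [mul_star_mul_self, mul_star_mul_self]
    · calc star h * star g * (g * h) * (star h * star g)
            = star h * ((star g * g) * (h * star h)) * star g := by simp only [mul_assoc]
        _ = star h * ((h * star h) * (star g * g)) * star g := by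
            rw [(commute_of_isIdempotentElem (isIdempotentElem_star_mul_self g)
              (isIdempotentElem_mul_star_self h)).eq]
        _ = (star h * h * star h) * (star g * g * star g) := by simp only [mul_assoc]
        _ = star h * star g := by rw [star_mul_self_mul_star, star_mul_self_mul_star]

theorem isIdempotentElem_conj {e : G} (he : IsIdempotentElem e) (g : G) :
    IsIdempotentElem (g * e * star g) := by
  calc g * e * star g * (g * e * star g) = g * (e * (star g * g)) * e * star g := by
        simp only [mul_assoc]
    _ = g * (star g * g) * (e * e) * star g := by
        rw [(commute_of_isIdempotentElem he (isIdempotentElem_star_mul_self g)).eq]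
        simp only [mul_assoc]
    _ = g * e * star g := by rw [he.eq, ← mul_assoc, mul_star_mul_self]

theorem mul_eq_mul_star_mul_mul {e : G} (he : IsIdempotentElem e) (g : G) :
    e * g = g * (star g * e * g) := by
  calc e * g = e * (g * star g) * g := by
        rw [mul_assoc, mul_assoc, ← mul_assoc g, mul_star_mul_self]
    _ = g * star g * e * g := by
        rw [(commute_of_isIdempotentElem he (isIdempotentElem_mul_star_self g)).eq]
    _ = g * (star g * e * g) := by simp only [mul_assoc]

end InverseSemigroup

theorem eq_of_mul_star_mul_eq {R : Type*} [Semigroup R] [StarMul R] {x y : R}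
    (hx : x * star x * x = x) (hxy : x * star x * y = x) (hyx : y * star y * x = y)
    (hc : Commute (x * star x) (y * star y)) : x = y := by
  calc x = x * star x * (y * star y * x) := by rw [hyx, hxy]
    _ = y * star y * (x * star x * x) := by simp only [← mul_assoc, hc.eq]
    _ = y := by rw [hx, hyx]

namespace Green

open InverseSemigroup

theorem ind_mul_ind (P Q : Prop) : ind P * ind Q = ind (P ∧ Q) := by
  unfold ind
  split_ifs <;> simp_all

section

variable {G : Type*} [InverseSemigroup G]
variable {A : Type*} [NonUnitalNormedRing A] [StarRing A] [NormedSpace ℂ A]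
variable {α : G → A →⋆ₙₐ[ℂ] A} {S : Set G} {r k h : F α} {s : G}

variable (α) in
theorem star_mkAlgHom (x : FreeStar (A ⊕ G)) :
    star (RingQuot.mkAlgHom ℂ (Rel α) x) = RingQuot.mkAlgHom ℂ (Rel α) (star x) := by
  simp only [RingQuot.mkAlgHom_def, RingQuot.mkRingHom_def]
  rfl

theorem ιG_mul (g h : G) : ιG α (g * h) = ιG α g * ιG α h := by
  rw [ιG, ιG, ιG, ← map_mul]
  exact RingQuot.mkAlgHom_rel ℂ (Rel.mul_G g h)

theorem ιG_star (g : G) : ιG α (star g) = star (ιG α g) := by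
  rw [ιG, ιG, RingQuot.mkAlgHom_rel ℂ (Rel.star_G (A := A) g), star_mkAlgHom]

theorem ιG_mul_ιG_mul (g h : G) (x : F α) : ιG α g * (ιG α h * x) = ιG α (g * h) * x := by
  rw [← mul_assoc, ← ιG_mul]

theorem isIdempotentElem_ιG {d : G} (hd : IsIdempotentElem d) : IsIdempotentElem (ιG α d) := by
  rw [IsIdempotentElem, ← ιG_mul, hd.eq]

theorem commute_ιG_ιA {d : G} (hd : IsIdempotentElem d) (x : A) :
    Commute (ιG α d) (ιA α x) := by
  have h : ιG α d * ιG α (star d) * ιA α x = ιA α x * ιG α d * ιG α (star d) := by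
    simpa only [ιA, ιG, map_mul] using RingQuot.mkAlgHom_rel ℂ (Rel.comm (α := α) d x)
  rwa [star_eq_self_of_isIdempotentElem hd, (isIdempotentElem_ιG hd).eq, mul_assoc,
    (isIdempotentElem_ιG hd).eq] at h

theorem ιA_apply_mul_ιG (g : G) (x : A) : ιA α (α g x) * ιG α g = ιG α g * ιA α x := by
  have h : ιA α (α g x) * ιG α g * ιG α (star g) = ιG α g * ιA α x * ιG α (star g) := by
    simpa only [ιA, ιG, map_mul] using RingQuot.mkAlgHom_rel ℂ (Rel.act (α := α) g x)
  calc ιA α (α g x) * ιG α g = ιA α (α g x) * ιG α g * ιG α (star g) * ιG α g := by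
        rw [mul_assoc _ (ιG α g), ← ιG_mul, mul_assoc, ← ιG_mul, mul_star_mul_self]
    _ = ιG α g * (ιA α x * ιG α (star g * g)) := by
        rw [h, ιG_mul]
        simp only [mul_assoc]
    _ = ιG α g * (ιG α (star g * g) * ιA α x) := by
        rw [(commute_ιG_ιA (isIdempotentElem_star_mul_self g) x).eq]
    _ = ιG α g * ιA α x := by rw [ιG_mul_ιG_mul, ← mul_assoc, mul_star_mul_self]

variable (α) in
def idempotentSpan : Submodule ℂ (F α) :=
  Submodule.span ℂ (ιG α '' {d | IsIdempotentElem d})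

theorem ιG_mem_idempotentSpan {d : G} (hd : IsIdempotentElem d) :
    ιG α d ∈ idempotentSpan α :=
  Submodule.subset_span ⟨d, hd, rfl⟩

namespace idempotentSpan

variable {X Y : F α}

theorem mul_mem (hX : X ∈ idempotentSpan α) (hY : Y ∈ idempotentSpan α) :
    X * Y ∈ idempotentSpan α := by
  have h := Submodule.mul_mem_mul hX hY
  rw [idempotentSpan, Submodule.span_mul_span] at h
  refine Submodule.span_mono ?_ h
  rintro _ ⟨_, ⟨d, hd, rfl⟩, _, ⟨d', hd', rfl⟩, rfl⟩
  exact ⟨d * d', isIdempotentElem_mul hd hd', ιG_mul d d'⟩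

theorem commute (hX : X ∈ idempotentSpan α) (hY : Y ∈ idempotentSpan α) : Commute X Y := by
  refine Commute.span_left (fun _ hd => Commute.span_right (fun _ hd' => ?_) Y hY) X hX
  obtain ⟨d, hd, rfl⟩ := hd
  obtain ⟨d', hd', rfl⟩ := hd'
  rw [Commute, SemiconjBy, ← ιG_mul, ← ιG_mul, (commute_of_isIdempotentElem hd hd').eq]

theorem commute_ιA (hX : X ∈ idempotentSpan α) (x : A) : Commute X (ιA α x) := by
  refine Commute.span_left (fun _ hd => ?_) X hX
  obtain ⟨d, hd, rfl⟩ := hd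
  exact commute_ιG_ιA hd x

theorem conj_mem (hX : X ∈ idempotentSpan α) (g : G) :
    ιG α g * X * ιG α (star g) ∈ idempotentSpan α := by
  suffices h : idempotentSpan α ≤
      (idempotentSpan α).comap (LinearMap.mulLeftRight ℂ (ιG α g, ιG α (star g))) from h hX
  refine Submodule.span_le.mpr ?_
  rintro _ ⟨d, hd, rfl⟩
  rw [SetLike.mem_coe, Submodule.mem_comap, LinearMap.mulLeftRight_apply, ← ιG_mul, ← ιG_mul]
  exact ιG_mem_idempotentSpan (isIdempotentElem_conj hd g)

end idempotentSpan

theorem IsGAlgebra.apply_apply (hα : IsGAlgebra α) (g h : G) (x : A) :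
    α g (α h x) = α (g * h) x := by
  rw [hα.map_mul]; rfl

theorem IsGAlgebra.apply_comm (hα : IsGAlgebra α) {d e : G} (hd : IsIdempotentElem d)
    (he : IsIdempotentElem e) (x : A) : α d (α e x) = α e (α d x) := by
  rw [hα.apply_apply, hα.apply_apply, (commute_of_isIdempotentElem hd he).eq]

theorem IsGAlgebra.apply_star_apply_mul_mul (hα : IsGAlgebra α) (s : G) (x y z : A) :
    α (star s) (α s x * y * z) = α (star s * s) (x * α (star s) y * α (star s) z) := by
  simp only [_root_.map_mul, hα.apply_apply, star_mul_self_mul_star]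

theorem actL_apply_comm (hα : IsGAlgebra α) {l : List G} (hl : ∀ e ∈ l, IsIdempotentElem e)
    {m : G} (hm : IsIdempotentElem m) (x : A) : actL α l (α m x) = α m (actL α l x) := by
  induction l with
  | nil => rfl
  | cons e l ih =>
    simp only [actL]
    rw [ih fun x hx => hl x (by simp [hx]), map_sub, hα.apply_comm (hl e (by simp)) hm]

theorem actStar_apply_comm (hα : IsGAlgebra α) (g : G) {e₀ : G} (he₀ : IsIdempotentElem e₀)
    {l : List G} (hl : ∀ e ∈ l, IsIdempotentElem e) {m : G} (hm : IsIdempotentElem m) (x : A) :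
    actStar α g e₀ l (α m x) =
      α (star g) (α m (actP α (g * e₀ * star g) (l.map fun e => g * e * star g) x)) := by
  have hl' : ∀ e ∈ l.map (fun e => g * e * star g), IsIdempotentElem e := by
    simp only [List.mem_map]
    rintro _ ⟨e, he, rfl⟩
    exact isIdempotentElem_conj (hl e he) g
  rw [actStar, actP, actP, actL_apply_comm hα hl' hm,
    hα.apply_comm (isIdempotentElem_conj he₀ g) hm]

theorem ιA_apply_apply_star_mul_self_mul (hα : IsGAlgebra α) {E : F α}
    (hE : E ∈ idempotentSpan α) (g s : G) (y : A) (R : F α) :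
    ιA α (α g (α (star s * s) y)) * (E * ιG α g * ιG α (star s) * R) =
      ιA α (α g y) * (E * ιG α g * ιG α (star s) * R) := by
  have hm := isIdempotentElem_star_mul_self s
  have hgs : ιG α g * ιG α (star s) = ιG α (g * (star s * s)) * ιG α (star s) := by
    rw [← ιG_mul, ← ιG_mul, mul_assoc, star_mul_self_mul_star]
  have key : ιA α (α g (α (star s * s) y)) * (ιG α g * ιG α (star s)) =
      ιA α (α g y) * (ιG α g * ιG α (star s)) := by
    calc ιA α (α g (α (star s * s) y)) * (ιG α g * ιG α (star s))
        = ιG α g * (ιA α y * ιG α (star s * s)) * ιG α (star s) := by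
          rw [hgs, hα.apply_apply, ← mul_assoc, ιA_apply_mul_ιG, ιG_mul, mul_assoc (ιG α g),
            (commute_ιG_ιA hm y).eq]
      _ = ιA α (α g y) * (ιG α g * ιG α (star s)) := by
          rw [mul_assoc, mul_assoc, ← ιG_mul, star_mul_self_mul_star, ← mul_assoc,
            ← ιA_apply_mul_ιG, mul_assoc]
  have h (x : A) : ιA α x * (E * ιG α g * ιG α (star s) * R) =
      E * (ιA α x * (ιG α g * ιG α (star s))) * R := by
    simp only [← mul_assoc]
    rw [(idempotentSpan.commute_ιA hE x).eq]
  rw [h, h, key]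

theorem elemP_concat (e₀ : G) (l : List G) (e : G) :
    elemP α e₀ (l ++ [e]) = elemP α e₀ l - elemP α e₀ l * ιG α e := by
  simp [elemP, List.foldl_append]

theorem elemP_mem_idempotentSpan {e₀ : G} (he₀ : IsIdempotentElem e₀) {l : List G}
    (hl : ∀ e ∈ l, IsIdempotentElem e) : elemP α e₀ l ∈ idempotentSpan α := by
  induction l using List.reverseRecOn with
  | nil => exact ιG_mem_idempotentSpan he₀
  | append_singleton l e ih =>
    have ih := ih fun x hx => hl x (by simp [hx])
    rw [elemP_concat]
    exact sub_mem ih (idempotentSpan.mul_mem ih (ιG_mem_idempotentSpan (hl e (by simp))))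

theorem isStarProjection_elemP {e₀ : G} (he₀ : IsIdempotentElem e₀) {l : List G}
    (hl : ∀ e ∈ l, IsIdempotentElem e) : IsStarProjection (elemP α e₀ l) := by
  have hιG {d : G} (hd : IsIdempotentElem d) : IsStarProjection (ιG α d) :=
    ⟨isIdempotentElem_ιG hd, by rw [IsSelfAdjoint, ← ιG_star, star_eq_self_of_isIdempotentElem hd]⟩
  induction l using List.reverseRecOn with
  | nil => exact hιG he₀
  | append_singleton l e ih =>
    have hl' : ∀ x ∈ l, IsIdempotentElem x := fun x hx => hl x (by simp [hx])
    have he : IsIdempotentElem e := hl e (by simp)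
    rw [elemP_concat, ← mul_one_sub]
    exact (ih hl').mul (hιG he).one_sub ((Commute.one_right _).sub_right
      (idempotentSpan.commute (elemP_mem_idempotentSpan he₀ hl') (ιG_mem_idempotentSpan he)))

theorem elemP_mul_ιG {l : List G} (hl : ∀ e ∈ l, IsIdempotentElem e) (e₀ : G) {f : G}
    (hf : IsIdempotentElem f) : elemP α e₀ l * ιG α f = elemP α (e₀ * f) l := by
  induction l using List.reverseRecOn with
  | nil => exact (ιG_mul e₀ f).symm
  | append_singleton l e ih =>
    have ih := ih fun x hx => hl x (by simp [hx])
    rw [elemP_concat, elemP_concat, sub_mul, ih, mul_assoc, ← ιG_mul,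
      (commute_of_isIdempotentElem (hl e (by simp)) hf).eq, ιG_mul, ← mul_assoc, ih]

theorem elemP_mul_elemP {l : List G} (hl : ∀ e ∈ l, IsIdempotentElem e) (e₀ : G) {f₀ : G}
    (hf₀ : IsIdempotentElem f₀) (m : List G) :
    elemP α e₀ l * elemP α f₀ m = elemP α (e₀ * f₀) (l ++ m) := by
  induction m using List.reverseRecOn with
  | nil => rw [List.append_nil]; exact elemP_mul_ιG hl e₀ hf₀
  | append_singleton m e ih =>
    rw [elemP_concat, mul_sub, ih, ← List.append_assoc, elemP_concat, ← mul_assoc, ih]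

theorem elemP_conj {l : List G} (hl : ∀ e ∈ l, IsIdempotentElem e) (e₀ u : G) :
    ιG α u * elemP α e₀ l * ιG α (star u) =
      elemP α (u * e₀ * star u) (l.map fun x => u * x * star u) := by
  induction l using List.reverseRecOn with
  | nil => rw [elemP, elemP, List.map_nil, List.foldl_nil, List.foldl_nil, ← ιG_mul, ← ιG_mul]
  | append_singleton l e ih =>
    have ih := ih fun x hx => hl x (by simp [hx])
    have he : e * star u = star u * (u * e * star u) := by
      simpa only [star_star] using mul_eq_mul_star_mul_mul (hl e (by simp)) (star u)
    rw [elemP_concat, List.map_append, List.map_singleton, elemP_concat, ← ih, mul_sub, sub_mul]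
    simp only [mul_assoc]
    conv_lhs => rw [← ιG_mul e, he, ιG_mul]
    simp only [mul_assoc]

theorem ιA_actStar_star_apply_mul_mul (hα : IsGAlgebra α) {g e₀ : G}
    (he₀ : IsIdempotentElem e₀) {l : List G} (hl : ∀ e ∈ l, IsIdempotentElem e) (x y z : A)
    (R : F α) :
    ιA α (actStar α g e₀ l (α (star s) (α s x * y * z))) *
        (star (elemGE α g e₀ l) * ιG α (star s) * R) =
      ιA α (actStar α g e₀ l (x * α (star s) y * α (star s) z)) *
        (star (elemGE α g e₀ l) * ιG α (star s) * R) := by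
  rw [hα.apply_star_apply_mul_mul, actStar_apply_comm hα g he₀ hl
    (isIdempotentElem_star_mul_self s), elemGE, star_mul, ← ιG_star,
    (isStarProjection_elemP he₀ hl).isSelfAdjoint.star_eq]
  exact ιA_apply_apply_star_mul_self_mul hα (elemP_mem_idempotentSpan he₀ hl) _ s _ _

theorem ιG_mul_mul_ιG_star_mul_self {X : F α} (hX : X ∈ idempotentSpan α) (p : G) :
    ιG α p * X * ιG α (star p * p) = ιG α p * X := by
  rw [mul_assoc, ← (idempotentSpan.commute (ιG_mem_idempotentSpan
    (isIdempotentElem_star_mul_self p)) hX).eq, ιG_mul_ιG_mul, ← mul_assoc, mul_star_mul_self]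

theorem mul_ιG_eq_ιG_mul_conj {X : F α} (hX : X ∈ idempotentSpan α) (g : G) :
    X * ιG α g = ιG α g * (ιG α (star g) * X * ιG α g) := by
  rw [← mul_assoc, ← mul_assoc, ← ιG_mul, ← (idempotentSpan.commute hX
    (ιG_mem_idempotentSpan (isIdempotentElem_mul_star_self g))).eq, mul_assoc, ← ιG_mul,
    mul_star_mul_self]

theorem mem_idempotentSpan_of_mem_EH {p : F α} (hp : p ∈ EH α S) : p ∈ idempotentSpan α := by
  obtain ⟨e₀, l, ⟨-, he₀⟩, hl, rfl⟩ := hp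
  exact elemP_mem_idempotentSpan he₀ fun e he => (hl e he).2

theorem isStarProjection_of_mem_EH {p : F α} (hp : p ∈ EH α S) : IsStarProjection p := by
  obtain ⟨e₀, l, ⟨-, he₀⟩, hl, rfl⟩ := hp
  exact isStarProjection_elemP he₀ fun e he => (hl e he).2

theorem ιG_mem_EH {d : G} (hd : d ∈ S) (hdd : IsIdempotentElem d) : ιG α d ∈ EH α S :=
  ⟨d, [], ⟨hd, hdd⟩, by simp, rfl⟩

theorem EH_mul_mem (hS : IsSubInvSemigroup S) {p q : F α} (hp : p ∈ EH α S)
    (hq : q ∈ EH α S) : p * q ∈ EH α S := by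
  obtain ⟨e₀, l, ⟨he₀S, he₀⟩, hl, rfl⟩ := hp
  obtain ⟨f₀, m, ⟨hf₀S, hf₀⟩, hm, rfl⟩ := hq
  refine ⟨e₀ * f₀, l ++ m, ⟨hS.mul_mem he₀S hf₀S, isIdempotentElem_mul he₀ hf₀⟩, ?_,
    elemP_mul_elemP (fun e he => (hl e he).2) e₀ hf₀ m⟩
  intro e he
  rcases List.mem_append.mp he with h | h
  exacts [hl e h, hm e h]

theorem EH_conj_mem (hS : IsSubInvSemigroup S) {u : G} (hu : u ∈ S) {p : F α}
    (hp : p ∈ EH α S) : ιG α u * p * ιG α (star u) ∈ EH α S := by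
  obtain ⟨e₀, l, ⟨he₀S, he₀⟩, hl, rfl⟩ := hp
  have hconj {e : G} (heS : e ∈ S) : u * e * star u ∈ S :=
    hS.mul_mem (hS.mul_mem hu heS) (hS.star_mem hu)
  refine ⟨u * e₀ * star u, l.map fun x => u * x * star u,
    ⟨hconj he₀S, isIdempotentElem_conj he₀ u⟩, ?_, elemP_conj (fun e he => (hl e he).2) e₀ u⟩
  simp only [List.mem_map]
  rintro _ ⟨x, hx, rfl⟩
  exact ⟨hconj (hl x hx).1, isIdempotentElem_conj (hl x hx).2 u⟩

theorem H0_mul_eq_zero_or_eq (hS : IsSubInvSemigroup S) {e q : F α} (he : e ∈ H0 α S)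
    (hq : q ∈ EH α S) : e * q = 0 ∨ e * q = e := by
  refine or_iff_not_imp_left.mpr fun hne => he.2.2 _ (EH_mul_mem hS he.1 hq) hne ?_
  rw [mul_assoc, ← (idempotentSpan.commute (mem_idempotentSpan_of_mem_EH he.1)
    (mem_idempotentSpan_of_mem_EH hq)).eq, ← mul_assoc,
    (isStarProjection_of_mem_EH he.1).isIdempotentElem.eq]

theorem H0_eq_of_mul_ne_zero (hS : IsSubInvSemigroup S) {e f : F α} (he : e ∈ H0 α S)
    (hf : f ∈ H0 α S) (hef : e * f ≠ 0) : e = f := by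
  have hc := idempotentSpan.commute (mem_idempotentSpan_of_mem_EH he.1)
    (mem_idempotentSpan_of_mem_EH hf.1)
  calc e = e * f := ((H0_mul_eq_zero_or_eq hS he hf.1).resolve_left hef).symm
    _ = f * e := hc.eq
    _ = f := (H0_mul_eq_zero_or_eq hS hf he.1).resolve_left (hc.eq ▸ hef)

theorem star_ιG_mul_mul_self {e : F α} (he : e ∈ EH α S) (p : G) :
    star (ιG α p * e) * (ιG α p * e) = e * ιG α (star p * p) := by
  have he' := isStarProjection_of_mem_EH he
  rw [star_mul, he'.isSelfAdjoint.star_eq, ← ιG_star, mul_assoc, ιG_mul_ιG_mul,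
    ← (idempotentSpan.commute (mem_idempotentSpan_of_mem_EH he)
      (ιG_mem_idempotentSpan (isIdempotentElem_star_mul_self p))).eq,
    ← mul_assoc, he'.isIdempotentElem.eq]

theorem ιG_mul_mul_star_mul_self {e : F α} (he : e ∈ EH α S) {g : G}
    (hg : e * ιG α (star g * g) = e) :
    ιG α g * e * star (ιG α g * e) * (ιG α g * e) = ιG α g * e := by
  rw [mul_assoc, star_ιG_mul_mul_self he, hg, mul_assoc,
    (isStarProjection_of_mem_EH he).isIdempotentElem.eq]

theorem Hgpd.exists_eq (hS : IsSubInvSemigroup S) {t : F α} (ht : t ∈ Hgpd α S) :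
    ∃ u ∈ S, ∃ f ∈ H0 α S, t = ιG α u * f ∧ f * ιG α (star u * u) = f := by
  obtain ⟨hne, u, hu, f, hf, rfl⟩ := ht
  refine ⟨u, hu, f, hf, rfl, (H0_mul_eq_zero_or_eq hS hf (ιG_mem_EH (hS.mul_mem (hS.star_mem hu) hu)
    (isIdempotentElem_star_mul_self u))).resolve_left fun h0 => hne ?_⟩
  rw [← ιG_mul_mul_ιG_star_mul_self (mem_idempotentSpan_of_mem_EH hf.1), mul_assoc, h0, mul_zero]

theorem Hgpd.star_mul_self_mem (hS : IsSubInvSemigroup S) {t : F α} (ht : t ∈ Hgpd α S) :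
    star t * t ∈ H0 α S := by
  obtain ⟨u, -, f, hf, rfl, hfu⟩ := Hgpd.exists_eq hS ht
  rwa [star_ιG_mul_mul_self hf.1, hfu]

theorem Hgpd.mul_star_mul_self (hS : IsSubInvSemigroup S) {t : F α} (ht : t ∈ Hgpd α S) :
    t * star t * t = t := by
  obtain ⟨u, -, f, hf, rfl, hfu⟩ := Hgpd.exists_eq hS ht
  exact ιG_mul_mul_star_mul_self hf.1 hfu

theorem conj_mem_H0 (hS : IsSubInvSemigroup S) {u : G} (hu : u ∈ S) {f : F α}
    (hf : f ∈ H0 α S) (hfu : f * ιG α (star u * u) = f) :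
    ιG α u * f * ιG α (star u) ∈ H0 α S := by
  have hfS := mem_idempotentSpan_of_mem_EH hf.1
  have hf'u : ιG α u * f * ιG α (star u) * ιG α u = ιG α u * f := by
    rw [mul_assoc, ← ιG_mul, ιG_mul_mul_ιG_star_mul_self hfS]
  refine ⟨EH_conj_mem hS hu hf.1, fun h0 => hf.2.1 ?_, fun q hq hq0 hqf' => ?_⟩
  · rw [← hfu, (idempotentSpan.commute hfS (ιG_mem_idempotentSpan
      (isIdempotentElem_star_mul_self u))).eq, ← ιG_mul_ιG_mul, ← hf'u, h0, zero_mul, mul_zero]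
  -- `q ≤ u f u*` pulls back to the nonzero projection `u* q u ≤ f`, which must be `f`.
  have hqS := mem_idempotentSpan_of_mem_EH hq
  have hq'EH : ιG α (star u) * q * ιG α u ∈ EH α S := by
    simpa only [star_star] using EH_conj_mem hS (hS.star_mem hu) hq
  have hq_uu : q * ιG α (u * star u) = q := by
    rw [← hqf', mul_assoc, mul_assoc _ _ (ιG α (u * star u)), ← ιG_mul,
      ← mul_assoc (star u) u (star u), star_mul_self_mul_star]
  have hqq : ιG α u * (ιG α (star u) * q * ιG α u) * ιG α (star u) = q := by
    simp only [mul_assoc]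
    rw [← ιG_mul, ιG_mul_ιG_mul, ← mul_assoc, (idempotentSpan.commute
      (ιG_mem_idempotentSpan (isIdempotentElem_mul_star_self u)) hqS).eq, hq_uu, hq_uu]
  have hq'f : ιG α (star u) * q * ιG α u * f = ιG α (star u) * q * ιG α u := by
    conv_rhs => rw [← hqf']
    rw [mul_assoc (ιG α (star u)) (q * _), mul_assoc q _ (ιG α u), hf'u]
    simp only [mul_assoc]
  have := hf.2.2 _ hq'EH (fun h => hq0 (by rw [← hqq, h, mul_zero, zero_mul])) hq'f
  rw [← hqq, this]

theorem Hgpd.star_mem (hS : IsSubInvSemigroup S) {t : F α} (ht : t ∈ Hgpd α S) :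
    star t ∈ Hgpd α S := by
  obtain ⟨u, hu, f, hf, rfl, hfu⟩ := Hgpd.exists_eq hS ht
  refine ⟨star_ne_zero.mpr ht.1, star u, hS.star_mem hu, _, conj_mem_H0 hS hu hf hfu, ?_⟩
  rw [star_mul, ← ιG_star, (isStarProjection_of_mem_EH hf.1).isSelfAdjoint.star_eq,
    mul_ιG_eq_ιG_mul_conj (mem_idempotentSpan_of_mem_EH hf.1), star_star]

theorem Hgpd.mul_mem (hS : IsSubInvSemigroup S) {t₁ t₂ : F α} (ht₁ : t₁ ∈ Hgpd α S)
    (ht₂ : t₂ ∈ Hgpd α S) (hne : t₁ * t₂ ≠ 0) : t₁ * t₂ ∈ Hgpd α S := by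
  obtain ⟨-, u₁, hu₁, f₁, hf₁, rfl⟩ := ht₁
  obtain ⟨-, u₂, hu₂, f₂, hf₂, rfl⟩ := ht₂
  have hq : ιG α (star u₂) * f₁ * ιG α u₂ ∈ EH α S := by
    simpa only [star_star] using EH_conj_mem hS (hS.star_mem hu₂) hf₁.1
  have h : ιG α u₁ * f₁ * (ιG α u₂ * f₂) =
      ιG α (u₁ * u₂) * (f₂ * (ιG α (star u₂) * f₁ * ιG α u₂)) := by
    rw [mul_assoc, ← mul_assoc f₁, mul_ιG_eq_ιG_mul_conj (mem_idempotentSpan_of_mem_EH hf₁.1),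
      (idempotentSpan.commute (mem_idempotentSpan_of_mem_EH hf₂.1)
        (mem_idempotentSpan_of_mem_EH hq)).eq, ιG_mul]
    simp only [mul_assoc]
  rcases H0_mul_eq_zero_or_eq hS hf₂ hq with h0 | h1
  · exact absurd (by rw [h, h0, mul_zero]) hne
  · exact ⟨hne, u₁ * u₂, hS.mul_mem hu₁ hu₂, f₂, hf₂, by rw [h, h1]⟩

theorem Hgpd.star_mul_self_eq (hS : IsSubInvSemigroup S) {t e : F α} (ht : t ∈ Hgpd α S)
    (he : e ∈ H0 α S) (hte : t * e = t) : star t * t = e :=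
  H0_eq_of_mul_ne_zero hS (Hgpd.star_mul_self_mem hS ht) he <| by
    rw [mul_assoc, hte]; exact (Hgpd.star_mul_self_mem hS ht).2.1

theorem Hgpd.mul_star_self_mem (hS : IsSubInvSemigroup S) {t : F α} (ht : t ∈ Hgpd α S) :
    t * star t ∈ H0 α S := by
  simpa only [star_star] using Hgpd.star_mul_self_mem hS (Hgpd.star_mem hS ht)

theorem Hgpd.mul_star_self_eq (hS : IsSubInvSemigroup S) {t e : F α} (ht : t ∈ Hgpd α S)
    (he : e ∈ H0 α S) (het : e * t = t) : t * star t = e := by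
  have h := congrArg star het
  rw [star_mul, (isStarProjection_of_mem_EH he.1).isSelfAdjoint.star_eq] at h
  simpa only [star_star] using Hgpd.star_mul_self_eq hS (Hgpd.star_mem hS ht) he h

theorem mem_GH_iff (hS : IsSubInvSemigroup S) {e : F α} (he : e ∈ H0 α S) (p : G) :
    ιG α p * e ∈ GH α S ↔ e * ιG α (star p * p) = e := by
  refine ⟨fun ⟨hne, m, e', he', hx, hm⟩ => ?_, fun h => ⟨fun h0 => he.2.1 ?_, p, e, he, rfl, h⟩⟩
  · obtain rfl : e = e' := H0_eq_of_mul_ne_zero hS he he' fun h0 => hne <| by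
      rw [hx, ← (isStarProjection_of_mem_EH he'.1).isIdempotentElem.eq, ← mul_assoc, ← hx,
        mul_assoc, h0, mul_zero]
    rw [← star_ιG_mul_mul_self he.1, hx, star_ιG_mul_mul_self he.1, hm]
  · rw [← h, ← star_ιG_mul_mul_self he.1, h0, mul_zero]

namespace GH

variable {x : F α}

theorem star_mul_self_mem (hx : x ∈ GH α S) : star x * x ∈ H0 α S := by
  obtain ⟨-, g, e, he, rfl, hg⟩ := hx
  rwa [star_ιG_mul_mul_self he.1, hg]

theorem mul_star_mul_self (hx : x ∈ GH α S) : x * star x * x = x := by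
  obtain ⟨-, g, e, he, rfl, hg⟩ := hx
  exact ιG_mul_mul_star_mul_self he.1 hg

theorem star_mul_mul_star (hx : x ∈ GH α S) : star x * x * star x = star x := by
  simpa only [star_mul, star_star, mul_assoc] using congrArg star (mul_star_mul_self hx)

theorem mul_star_self_mem_idempotentSpan (hx : x ∈ GH α S) :
    x * star x ∈ idempotentSpan α := by
  obtain ⟨-, g, e, he, rfl, -⟩ := hx
  have he' := isStarProjection_of_mem_EH he.1
  rw [star_mul, ← ιG_star, he'.isSelfAdjoint.star_eq, ← mul_assoc, mul_assoc (ιG α g) e e,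
    he'.isIdempotentElem.eq]
  exact idempotentSpan.conj_mem (mem_idempotentSpan_of_mem_EH he.1) g

theorem ιG_mul_mem_iff (hS : IsSubInvSemigroup S) (hx : x ∈ GH α S) (q : G) :
    ιG α q * x ∈ GH α S ↔ star (ιG α q * x) * (ιG α q * x) = star x * x := by
  obtain ⟨-, g, e, he, rfl, hg⟩ := hx
  rw [ιG_mul_ιG_mul, mem_GH_iff hS he, star_ιG_mul_mul_self he.1, star_ιG_mul_mul_self he.1, hg]

theorem ιG_mul_mul_star_mul_self (hx : x ∈ GH α S) (q : G) :
    ιG α q * x * star (ιG α q * x) * (ιG α q * x) = ιG α q * x := by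
  calc ιG α q * x * star (ιG α q * x) * (ιG α q * x)
      = ιG α q * (x * star x * ιG α (star q * q) * x) := by
        rw [star_mul, ← ιG_star, ιG_mul]; simp only [mul_assoc]
    _ = ιG α q * (ιG α (star q * q) * (x * star x * x)) := by
        rw [(idempotentSpan.commute (mul_star_self_mem_idempotentSpan hx)
          (ιG_mem_idempotentSpan (isIdempotentElem_star_mul_self q))).eq]
        simp only [mul_assoc]
    _ = ιG α q * x := by
        rw [mul_star_mul_self hx, ιG_mul_ιG_mul, ← mul_assoc, InverseSemigroup.mul_star_mul_self]

theorem ιG_star_mul_ιG_mul (hS : IsSubInvSemigroup S) (hx : x ∈ GH α S) {q : G}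
    (hqx : ιG α q * x ∈ GH α S) : ιG α (star q) * (ιG α q * x) = x := by
  calc ιG α (star q) * (ιG α q * x) = ιG α (star q * q) * (x * star x * x) := by
        rw [mul_star_mul_self hx, ιG_mul_ιG_mul]
    _ = x * (star (ιG α q * x) * (ιG α q * x)) := by
        rw [← mul_assoc, ← (idempotentSpan.commute (mul_star_self_mem_idempotentSpan hx)
          (ιG_mem_idempotentSpan (isIdempotentElem_star_mul_self q))).eq, star_mul, ← ιG_star,
          ιG_mul]
        simp only [mul_assoc]
    _ = x := by rw [(ιG_mul_mem_iff hS hx q).mp hqx, ← mul_assoc, mul_star_mul_self hx]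

end GH

theorem mul_star_eq_of_mem_Hgpd (hS : IsSubInvSemigroup S) (hk : k ∈ GH α S)
    (hT : star k * ιG α (star s) * h ∈ Hgpd α S) :
    star k * ιG α (star s) * h * star (star k * ιG α (star s) * h) = star k * k :=
  Hgpd.mul_star_self_eq hS hT (GH.star_mul_self_mem hk) <| by
    simp only [← mul_assoc, GH.star_mul_mul_star hk]

theorem star_mul_eq_of_mem_Hgpd (hS : IsSubInvSemigroup S) (hh : h ∈ GH α S)
    (hT : star k * ιG α (star s) * h ∈ Hgpd α S) :
    star (star k * ιG α (star s) * h) * (star k * ιG α (star s) * h) = star h * h :=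
  Hgpd.star_mul_self_eq hS hT (GH.star_mul_self_mem hh) <| by
    rw [mul_assoc _ h, ← mul_assoc h, GH.mul_star_mul_self hh]

theorem ιG_mul_mem_GH_of_mem_Hgpd (hS : IsSubInvSemigroup S) (hk : k ∈ GH α S)
    (hT : star k * ιG α (star s) * h ∈ Hgpd α S) : ιG α s * k ∈ GH α S := by
  set T := star k * ιG α (star s) * h
  have hTs : star T = star h * (ιG α s * k) := by
    simp only [T, star_mul, ← ιG_star, star_star, mul_assoc]
  rw [GH.ιG_mul_mem_iff hS hk]
  calc star (ιG α s * k) * (ιG α s * k)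
      = star k * k * (star (ιG α s * k) * (ιG α s * k)) := by
        conv_lhs => rw [star_mul, ← GH.star_mul_mul_star hk]
        simp only [star_mul, mul_assoc]
    _ = T * (star h * (ιG α s * k * star (ιG α s * k) * (ιG α s * k))) := by
        rw [← mul_star_eq_of_mem_Hgpd hS hk hT, hTs]
        simp only [T, mul_assoc]
    _ = star k * k := by
        rw [GH.ιG_mul_mul_star_mul_self hk, ← hTs, mul_star_eq_of_mem_Hgpd hS hk hT]

theorem ιG_star_mul_mem_GH_of_mem_Hgpd (hS : IsSubInvSemigroup S) (hh : h ∈ GH α S)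
    (hT : star k * ιG α (star s) * h ∈ Hgpd α S) : ιG α (star s) * h ∈ GH α S := by
  refine ιG_mul_mem_GH_of_mem_Hgpd (h := k) hS hh ?_
  simpa only [star_mul, ← ιG_star, star_star, mul_assoc] using Hgpd.star_mem hS hT

theorem mul_eq_of_mem_Hgpd (hS : IsSubInvSemigroup S) (hk : k ∈ GH α S) (hh : h ∈ GH α S)
    (hT : star k * ιG α (star s) * h ∈ Hgpd α S) :
    k * (star k * ιG α (star s) * h) = ιG α (star s) * h := by
  set T := star k * ιG α (star s) * h
  have hkT : k * T * star (k * T) = k * star k := by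
    rw [star_mul, ← mul_assoc, mul_assoc k, mul_star_eq_of_mem_Hgpd hS hk hT, ← mul_assoc,
      GH.mul_star_mul_self hk]
  have hTs : star T = star (ιG α (star s) * h) * k := by
    simp only [T, star_mul, star_star, mul_assoc]
  refine eq_of_mul_star_mul_eq ?_ ?_ ?_ ?_
  · rw [hkT, ← mul_assoc, GH.mul_star_mul_self hk]
  · rw [hkT]; simp only [T, mul_assoc]
  · calc ιG α (star s) * h * star (ιG α (star s) * h) * (k * T)
          = ιG α (star s) * h * (star T * T) := by rw [hTs]; simp only [mul_assoc]
      _ = ιG α (star s) * h := by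
          rw [star_mul_eq_of_mem_Hgpd hS hh hT, mul_assoc _ h, ← mul_assoc h,
            GH.mul_star_mul_self hh]
  · refine idempotentSpan.commute (hkT ▸ GH.mul_star_self_mem_idempotentSpan hk) ?_
    simpa only [star_mul, ← ιG_star, mul_assoc] using
      idempotentSpan.conj_mem (GH.mul_star_self_mem_idempotentSpan hh) (star s)

theorem equivH_ιG_star_of_equivH (hS : IsSubInvSemigroup S) (hr : r ∈ GH α S)
    (hk : k ∈ GH α S) (hh : h ∈ GH α S) (hT : star k * ιG α (star s) * h ∈ Hgpd α S)
    (hrk : equivH α S r (ιG α s * k)) :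
    ιG α (star s) * r ∈ GH α S ∧ equivH α S (ιG α (star s) * r) (ιG α (star s) * h) := by
  set T := star k * ιG α (star s) * h
  obtain ⟨t, ht, hrt⟩ := hrk
  have hsk := ιG_mul_mem_GH_of_mem_Hgpd hS hk hT
  have hrange : star r * r = t * star t := by
    refine H0_eq_of_mul_ne_zero hS (GH.star_mul_self_mem hr) (Hgpd.mul_star_self_mem hS ht)
      fun h0 => hsk.1 ?_
    calc ιG α s * k = r * star r * r * (t * star t * t) := by
          rw [GH.mul_star_mul_self hr, Hgpd.mul_star_mul_self hS ht, hrt]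
      _ = r * (star r * r * (t * star t)) * t := by simp only [mul_assoc]
      _ = 0 := by rw [h0, mul_zero, zero_mul]
  have hr' : ιG α s * (ιG α (star s) * r) = r := by
    have hr_eq : r = ιG α s * k * star t := by
      rw [← hrt, mul_assoc, ← hrange, ← mul_assoc, GH.mul_star_mul_self hr]
    rw [hr_eq]
    simp only [← mul_assoc, ← ιG_mul, InverseSemigroup.mul_star_mul_self]
  have hskT : ιG α (star s) * r * t = k := by
    rw [mul_assoc, hrt, GH.ιG_star_mul_ιG_mul hS hk hsk]
  refine ⟨(GH.ιG_mul_mem_iff hS hr (star s)).mpr ?_, t * T, Hgpd.mul_mem hS ht hT fun h0 =>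
    (ιG_star_mul_mem_GH_of_mem_Hgpd hS hh hT).1 ?_, ?_⟩
  · rw [star_mul, ← ιG_star, star_star, mul_assoc, hr']
  · calc ιG α (star s) * h = k * T := (mul_eq_of_mem_Hgpd hS hk hh hT).symm
      _ = ιG α (star s) * r * (t * T) := by rw [← mul_assoc (ιG α (star s) * r), hskT]
      _ = 0 := by rw [h0, mul_zero]
  · rw [← mul_assoc, hskT, mul_eq_of_mem_Hgpd hS hk hh hT]

theorem equivH_of_equivH_ιG_star (hS : IsSubInvSemigroup S) (hr : r ∈ GH α S)
    (hk : k ∈ GH α S) (hh : h ∈ GH α S) (hT : star k * ιG α (star s) * h ∈ Hgpd α S)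
    (hsr : ιG α (star s) * r ∈ GH α S)
    (hrh : equivH α S (ιG α (star s) * r) (ιG α (star s) * h)) :
    equivH α S r (ιG α s * k) := by
  set T := star k * ιG α (star s) * h
  obtain ⟨t, ht, hrt⟩ := hrh
  have hsk := ιG_mul_mem_GH_of_mem_Hgpd hS hk hT
  have hss {x : F α} (hx : x ∈ GH α S) (hsx : ιG α (star s) * x ∈ GH α S) :
      ιG α s * (ιG α (star s) * x) = x := by
    simpa only [star_star] using GH.ιG_star_mul_ιG_mul hS hx hsx
  have hrt' : r * t = h := by
    rw [← hss hr hsr, mul_assoc, hrt, hss hh (ιG_star_mul_mem_GH_of_mem_Hgpd hS hh hT)]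
  have hhT : h * star T = ιG α s * k := by
    calc h * star T = ιG α s * (k * T) * star T := by
          rw [mul_eq_of_mem_Hgpd hS hk hh hT, hss hh (ιG_star_mul_mem_GH_of_mem_Hgpd hS hh hT)]
      _ = ιG α s * (k * (T * star T)) := by simp only [mul_assoc]
      _ = ιG α s * k := by
          rw [mul_star_eq_of_mem_Hgpd hS hk hT, ← mul_assoc k, GH.mul_star_mul_self hk]
  refine ⟨t * star T, Hgpd.mul_mem hS ht (Hgpd.star_mem hS hT) fun h0 => hsk.1 ?_, ?_⟩
  · rw [← hhT, ← hrt', mul_assoc, h0, mul_zero]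
  · rw [← mul_assoc, hrt', hhT]

end

theorem x4_eq_x5_general
    {G : Type*} [InverseSemigroup G]
    {A : Type*} [NonUnitalNormedRing A] [StarRing A] [NormedSpace ℂ A]
    (α : G → A →⋆ₙₐ[ℂ] A) (hα : IsGAlgebra α)
    (S : Set G) (hS : IsSubInvSemigroup S)
    (a b c : A)
    (rg re₀ : G) (rl : List G)
    (hrGH : elemGE α rg re₀ rl ∈ GH α S)
    (gg ge₀ : G) (gl : List G) (hge : ge₀ * ge₀ = ge₀) (hgl : ∀ e ∈ gl, e * e = e)
    (hgGH : elemGE α gg ge₀ gl ∈ GH α S)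
    (hg he₀ : G) (lh : List G)
    (hhGH : elemGE α hg he₀ lh ∈ GH α S)
    (s : G) :
    (ind (ιG α s * elemGE α gg ge₀ gl ∈ GH α S) *
     ind (equivH α S (elemGE α rg re₀ rl) (ιG α s * elemGE α gg ge₀ gl)) *
     ind (star (elemGE α gg ge₀ gl) * ιG α (star s) * elemGE α hg he₀ lh ∈ Hgpd α S)) •
      (ιA α (actStar α gg ge₀ gl (α (star s) (α s (star b) * star a * c))) *
        (star (elemGE α gg ge₀ gl) * ιG α (star s) * elemGE α hg he₀ lh))
    = (ind (star (elemGE α gg ge₀ gl) * ιG α (star s) * elemGE α hg he₀ lh ∈ Hgpd α S) *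
       ind (ιG α (star s) * elemGE α rg re₀ rl ∈ GH α S) *
       ind (ιG α (star s) * elemGE α hg he₀ lh ∈ GH α S) *
       ind (equivH α S (ιG α (star s) * elemGE α rg re₀ rl)
             (ιG α (star s) * elemGE α hg he₀ lh))) •
      (ιA α (actStar α gg ge₀ gl (star b * α (star s) (star a) * α (star s) c)) *
        (star (elemGE α gg ge₀ gl) * ιG α (star s) * elemGE α hg he₀ lh)) := by
  rw [ιA_actStar_star_apply_mul_mul hα hge hgl, ind_mul_ind, ind_mul_ind, ind_mul_ind,
    ind_mul_ind, ind_mul_ind]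
  congr 2
  apply propext
  by_cases hT : star (elemGE α gg ge₀ gl) * ιG α (star s) * elemGE α hg he₀ lh ∈ Hgpd α S
  · have := equivH_ιG_star_of_equivH hS hrGH hgGH hhGH hT
    have := equivH_of_equivH_ιG_star hS hrGH hgGH hhGH hT
    have := ιG_mul_mem_GH_of_mem_Hgpd hS hgGH hT
    have := ιG_star_mul_mem_GH_of_mem_Hgpd hS hhGH hT
    tauto
  · tauto

/-- The identity of the expressions (x4) and (x5) in the proof of
`⟨f x, y⟩_{B₀} = ⟨x, f* y⟩_{B₀}` on standard elements:  for all `a, b, c ∈ A`, all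
`r, g, h ∈ G_H` (given by representations) and all `s ∈ G`,
`[s g ∈ G_H]·[r ≡ s g]·[g* s* h ∈ H] · α_{g*}(α_{s*}(α_s(b*)·a*·c)) · (g* s* h)
  = [g* s* h ∈ H]·[s* r ∈ G_H]·[s* h ∈ G_H]·[s* r ≡ s* h] ·
      α_{g*}(b*·α_{s*}(a*)·α_{s*}(c)) · (g* s* h)` in `𝔽(G,A)`. -/
theorem x4_eq_x5
    {G : Type*} [InverseSemigroup G]
    {A : Type*} [NonUnitalNormedRing A] [StarRing A] [CStarRing A] [NormedSpace ℂ A]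
    [IsScalarTower ℂ A A] [SMulCommClass ℂ A A] [StarModule ℂ A] [CompleteSpace A]
    (α : G → A →⋆ₙₐ[ℂ] A) (hα : IsGAlgebra α)
    (S : Set G) (hS : IsSubInvSemigroup S) (hSfin : S.Finite)
    (a b c : A)
    (rg re₀ : G) (rl : List G) (hre : re₀ * re₀ = re₀) (hrl : ∀ e ∈ rl, e * e = e)
    (hrH0 : elemP α re₀ rl ∈ H0 α S) (hrGH : elemGE α rg re₀ rl ∈ GH α S)
    (gg ge₀ : G) (gl : List G) (hge : ge₀ * ge₀ = ge₀) (hgl : ∀ e ∈ gl, e * e = e)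
    (hgH0 : elemP α ge₀ gl ∈ H0 α S) (hgGH : elemGE α gg ge₀ gl ∈ GH α S)
    (hg he₀ : G) (lh : List G) (hhe : he₀ * he₀ = he₀) (hlh : ∀ e ∈ lh, e * e = e)
    (hhH0 : elemP α he₀ lh ∈ H0 α S) (hhGH : elemGE α hg he₀ lh ∈ GH α S)
    (s : G) :
    (ind (ιG α s * elemGE α gg ge₀ gl ∈ GH α S) *
     ind (equivH α S (elemGE α rg re₀ rl) (ιG α s * elemGE α gg ge₀ gl)) *
     ind (star (elemGE α gg ge₀ gl) * ιG α (star s) * elemGE α hg he₀ lh ∈ Hgpd α S)) •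
      (ιA α (actStar α gg ge₀ gl (α (star s) (α s (star b) * star a * c))) *
        (star (elemGE α gg ge₀ gl) * ιG α (star s) * elemGE α hg he₀ lh))
    = (ind (star (elemGE α gg ge₀ gl) * ιG α (star s) * elemGE α hg he₀ lh ∈ Hgpd α S) *
       ind (ιG α (star s) * elemGE α rg re₀ rl ∈ GH α S) *
       ind (ιG α (star s) * elemGE α hg he₀ lh ∈ GH α S) *
       ind (equivH α S (ιG α (star s) * elemGE α rg re₀ rl)
             (ιG α (star s) * elemGE α hg he₀ lh))) •
      (ιA α (actStar α gg ge₀ gl (star b * α (star s) (star a) * α (star s) c)) *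
        (star (elemGE α gg ge₀ gl) * ιG α (star s) * elemGE α hg he₀ lh)) :=
  x4_eq_x5_general α hα S hS a b c rg re₀ rl hrGH gg ge₀ gl hge hgl hgGH hg he₀ lh hhGH s
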